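/- arXiv:1810.01073 — 7 statements merged into one kernel-verified Lean document; each statement's English description precedes it below -/
import Mathlib

section
/- Let G be a finite simple graph, let k ≥ 1 be a natural number, and let M be a maximal matching of G such that G contains no M-augmenting path of length at most 2k−1. Then for every matching M′ of G one has k·|M′| ≤ (k+1)·|M|; in other words, M has size at least a k/(k+1) fraction of the maximum cardinality matching of G. -/
/-!
Let `S`, `T`, `X` be the vertices covered by `M'` only, by `M` only, and by both, so that
`|S| + |X| = 2|M'|` and `|T| + |X| = 2|M|`. From each `v ∈ S` follow the walk that alternates
between `M'`-edges and `M`-edges. Such a walk can be retraced backwards uniquely, so two of them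
(from vertices not covered by `M`) never visit a vertex at positions of the same parity unless
they are the same walk at the same position. If the walk from `v` gets stuck within `2k` steps,
it stops after an even number of steps at a vertex of `T`, since an odd stop would be an
augmenting path of length at most `2k - 1`; otherwise its vertices at positions `1, 3, …, 2k - 1`
lie in `X`. Hence `k|S| ≤ k|T| + |X|`, and
`2k|M'| = k|S| + k|X| ≤ (k + 1)(|T| + |X|) = 2(k + 1)|M|`.
-/

/-- `M` is a matching of `G`: a set of edges of `G`, no two of which share a vertex. -/
def IsMatching {V : Type*} (G : SimpleGraph V) (M : Set (Sym2 V)) : Prop :=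
  M ⊆ G.edgeSet ∧ ∀ e ∈ M, ∀ f ∈ M, e ≠ f → ∀ v : V, v ∈ e → v ∉ f

/-- A vertex is matched by `M` if it lies on some edge of `M`. -/
def MatchedBy {V : Type*} (M : Set (Sym2 V)) (v : V) : Prop := ∃ e ∈ M, v ∈ e

/-- `p 0, p 1, …, p ℓ` is an `M`-augmenting path of length `ℓ` in `G`:
distinct vertices, consecutive vertices adjacent, edges alternate (the `i`-th edge is in `M`
iff `i` is odd, so the path starts and ends with non-matching edges), and both
endpoints are free (unmatched). -/
def IsAugmentingPath {V : Type*} (G : SimpleGraph V) (M : Set (Sym2 V)) (ℓ : ℕ)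
    (p : ℕ → V) : Prop :=
  0 < ℓ ∧
  (∀ i j, i ≤ ℓ → j ≤ ℓ → p i = p j → i = j) ∧
  (∀ i, i < ℓ → G.Adj (p i) (p (i + 1))) ∧
  (∀ i, i < ℓ → (s(p i, p (i + 1)) ∈ M ↔ i % 2 = 1)) ∧
  ¬ MatchedBy M (p 0) ∧ ¬ MatchedBy M (p ℓ)

theorem Set.ncard_le_ncard_of_forall_subsingleton {α β : Type*} {s : Set α} {t : Set β}
    [Finite t] (r : α → β → Prop) (hs : ∀ a ∈ s, ∃ b ∈ t, r a b)
    (ht : ∀ b ∈ t, {a ∈ s | r a b}.Subsingleton) : s.ncard ≤ t.ncard := by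
  choose f hft hrf using fun a : s => hs a a.2
  rw [← Nat.card_coe_set_eq, ← Nat.card_coe_set_eq]
  refine Nat.card_le_card_of_injective (fun a => ⟨f a, hft a⟩) fun a b hab => Subtype.ext ?_
  have hfab : f a = f b := congrArg Subtype.val hab
  exact ht _ (hft a) ⟨a.2, hrf a⟩ ⟨b.2, hfab ▸ hrf b⟩

section Partner

variable {V : Type*} {G : SimpleGraph V} {N : Set (Sym2 V)} {v w w' : V}

open Classical in
noncomputable def partner (N : Set (Sym2 V)) (v : V) : Option V :=
  if h : ∃ w, s(v, w) ∈ N then some h.choose else none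

theorem matchedBy_iff_exists_mk_mem : MatchedBy N v ↔ ∃ w, s(v, w) ∈ N := by
  constructor
  · rintro ⟨e, he, hv⟩
    obtain ⟨w, rfl⟩ := Sym2.mem_iff_exists.mp hv
    exact ⟨w, he⟩
  · rintro ⟨w, hw⟩
    exact ⟨_, hw, Sym2.mem_mk_left v w⟩

theorem partner_eq_none_iff : partner N v = none ↔ ¬ MatchedBy N v := by
  rw [matchedBy_iff_exists_mk_mem, partner]
  split_ifs with h <;> simp [h]

theorem IsMatching.not_mk_mem_self (hN : IsMatching G N) : s(v, v) ∉ N :=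
  fun h => (G.mem_edgeSet.mp (hN.1 h)).ne rfl

theorem IsMatching.eq_of_mk_mem (hN : IsMatching G N) (h : s(v, w) ∈ N) (h' : s(v, w') ∈ N) :
    w = w' := by
  by_contra hne
  exact hN.2 _ h _ h' (mt Sym2.congr_right.mp hne) v (Sym2.mem_mk_left v w)
    (Sym2.mem_mk_left v w')

theorem IsMatching.partner_eq_some_iff (hN : IsMatching G N) :
    partner N v = some w ↔ s(v, w) ∈ N := by
  rw [partner]
  split_ifs with h
  · exact ⟨fun hw => Option.some_inj.mp hw ▸ h.choose_spec,
      fun hw => congrArg some (hN.eq_of_mk_mem h.choose_spec hw)⟩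
  · simpa using fun hw => h ⟨w, hw⟩

theorem IsMatching.partner_symm (hN : IsMatching G N) (h : partner N v = some w) :
    partner N w = some v := by
  rw [hN.partner_eq_some_iff, Sym2.eq_swap]
  exact hN.partner_eq_some_iff.mp h

theorem IsMatching.partner_ne_self (hN : IsMatching G N) : partner N v ≠ some v :=
  fun h => hN.not_mk_mem_self (hN.partner_eq_some_iff.mp h)

theorem IsMatching.ncard_setOf_matchedBy [Finite V] (hN : IsMatching G N) :
    ({v | MatchedBy N v}).ncard = 2 * N.ncard := by
  classical
  have hfin := N.toFinite
  have hunion : {v | MatchedBy N v} = ↑(hfin.toFinset.biUnion Sym2.toFinset) := by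
    ext v
    simp [MatchedBy]
  have hdisj : (hfin.toFinset : Set (Sym2 V)).PairwiseDisjoint Sym2.toFinset := by
    intro e he f hf hef
    simp only [Set.Finite.coe_toFinset] at he hf
    exact Finset.disjoint_left.mpr fun v hve hvf =>
      hN.2 e he f hf hef v (Sym2.mem_toFinset.mp hve) (Sym2.mem_toFinset.mp hvf)
  have htwo : ∀ e ∈ hfin.toFinset, e.toFinset.card = 2 := by
    intro e he
    refine Sym2.card_toFinset_of_not_isDiag e fun hdiag => ?_
    exact G.not_isDiag_of_mem_edgeSet (hN.1 (hfin.mem_toFinset.mp he)) hdiag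
  rw [hunion, Set.ncard_coe_finset, Finset.card_biUnion hdisj, Finset.sum_congr rfl htwo,
    Finset.sum_const, smul_eq_mul, mul_comm, Set.ncard_eq_toFinset_card N hfin]

end Partner

theorem exists_last_isSome_of_eq_none {α : Type*} (f : ℕ → Option α) (h0 : (f 0).isSome)
    {n : ℕ} (hn : f n = none) : ∃ m < n, (f m).isSome ∧ f (m + 1) = none := by
  induction n with
  | zero => simp [hn] at h0
  | succ n ih =>
    cases hfn : f n with
    | none => obtain ⟨m, hm, hsome, hnone⟩ := ih hfn; exact ⟨m, by omega, hsome, hnone⟩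
    | some x => exact ⟨n, by omega, by simp [hfn], hn⟩

section AltWalk

variable {V : Type*} {G : SimpleGraph V} {N₁ N₂ : Set (Sym2 V)} {v u x y : V} {m n i j : ℕ}

noncomputable def altWalk (N₁ N₂ : Set (Sym2 V)) (v : V) : ℕ → Option V
  | 0 => some v
  | n + 1 => (altWalk N₁ N₂ v n).bind (partner (if n % 2 = 0 then N₁ else N₂))

theorem altWalk_succ_of_eq_some (h : altWalk N₁ N₂ v n = some x) :
    altWalk N₁ N₂ v (n + 1) = partner (if n % 2 = 0 then N₁ else N₂) x := by
  simp [altWalk, h]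

theorem altWalk_isSome_of_le (h : (altWalk N₁ N₂ v n).isSome) (hmn : m ≤ n) :
    (altWalk N₁ N₂ v m).isSome := by
  induction n, hmn using Nat.le_induction with
  | base => exact h
  | succ n _ ih =>
    apply ih
    cases hn : altWalk N₁ N₂ v n <;> simp_all [altWalk]

theorem exists_altWalk_eq_some_of_le (h : altWalk N₁ N₂ v n = some x) (hmn : m ≤ n) :
    ∃ y, altWalk N₁ N₂ v m = some y :=
  Option.isSome_iff_exists.mp (altWalk_isSome_of_le (by simp [h]) hmn)

theorem altWalk_eq_some_getD (h : (altWalk N₁ N₂ v n).isSome) (hmn : m ≤ n) :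
    altWalk N₁ N₂ v m = some ((altWalk N₁ N₂ v m).getD v) := by
  obtain ⟨x, hx⟩ := Option.isSome_iff_exists.mp (altWalk_isSome_of_le h hmn)
  simp [hx]

variable (hN₁ : IsMatching G N₁) (hN₂ : IsMatching G N₂)
include hN₁ hN₂

theorem IsMatching.ite (p : Prop) [Decidable p] : IsMatching G (if p then N₁ else N₂) := by
  split_ifs <;> assumption

theorem altWalk_mk_mem (hx : altWalk N₁ N₂ v n = some x)
    (hy : altWalk N₁ N₂ v (n + 1) = some y) : s(x, y) ∈ if n % 2 = 0 then N₁ else N₂ := by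
  rw [altWalk_succ_of_eq_some hx] at hy
  exact ((hN₁.ite hN₂ _).partner_eq_some_iff).mp hy

theorem altWalk_eq_partner_of_succ (h : altWalk N₁ N₂ v (n + 1) = some x) :
    altWalk N₁ N₂ v n = partner (if n % 2 = 0 then N₁ else N₂) x := by
  obtain ⟨y, hy, hyx⟩ := Option.bind_eq_some_iff.mp h
  rw [hy, (hN₁.ite hN₂ _).partner_symm hyx]

theorem altWalk_matchedBy_of_succ (h : altWalk N₁ N₂ v (n + 1) = some x) :
    MatchedBy (if n % 2 = 0 then N₁ else N₂) x := by
  obtain ⟨y, hy⟩ := exists_altWalk_eq_some_of_le h n.le_succ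
  exact ⟨_, altWalk_mk_mem hN₁ hN₂ hy h, Sym2.mem_mk_right y x⟩

theorem altWalk_eq_of_mod_two_eq (hv : ¬ MatchedBy N₂ v) (hu : ¬ MatchedBy N₂ u)
    (hi : altWalk N₁ N₂ v i = some x) (hj : altWalk N₁ N₂ u j = some x)
    (hij : i % 2 = j % 2) : v = u ∧ i = j := by
  induction i generalizing j x with
  | zero =>
    obtain rfl : v = x := Option.some_inj.mp hi
    cases j with
    | zero =>
      obtain rfl : u = v := Option.some_inj.mp hj
      exact ⟨rfl, rfl⟩
    | succ j =>
      have := altWalk_matchedBy_of_succ hN₁ hN₂ hj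
      rw [if_neg (by omega)] at this
      exact (hv this).elim
  | succ i ih =>
    cases j with
    | zero =>
      obtain rfl : u = x := Option.some_inj.mp hj
      have := altWalk_matchedBy_of_succ hN₁ hN₂ hi
      rw [if_neg (by omega)] at this
      exact (hu this).elim
    | succ j =>
      have hback := altWalk_eq_partner_of_succ hN₁ hN₂ hj
      rw [show j % 2 = i % 2 by omega, ← altWalk_eq_partner_of_succ hN₁ hN₂ hi] at hback
      obtain ⟨y, hy⟩ := exists_altWalk_eq_some_of_le hi i.le_succ
      obtain ⟨rfl, rfl⟩ := ih hy (hback.trans hy) (by omega)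
      exact ⟨rfl, rfl⟩

theorem altWalk_ne_of_odd_gap (d : ℕ) (hi : altWalk N₁ N₂ v i = some x) :
    altWalk N₁ N₂ v (i + 2 * d + 1) ≠ some x := by
  induction d generalizing i x with
  | zero =>
    rw [altWalk_succ_of_eq_some hi]
    exact (hN₁.ite hN₂ _).partner_ne_self
  | succ d ih =>
    intro h
    rw [show i + 2 * (d + 1) + 1 = i + 2 * d + 2 + 1 by ring] at h
    have hback := altWalk_eq_partner_of_succ hN₁ hN₂ h
    rw [show (i + 2 * d + 2) % 2 = i % 2 by omega, ← altWalk_succ_of_eq_some hi] at hback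
    obtain ⟨y, hy⟩ := exists_altWalk_eq_some_of_le (m := i + 1) h (by omega)
    exact ih hy (by rw [show i + 1 + 2 * d + 1 = i + 2 * d + 2 by omega, hback, hy])

theorem altWalk_injective (hv : ¬ MatchedBy N₂ v) (hi : altWalk N₁ N₂ v i = some x)
    (hj : altWalk N₁ N₂ v j = some x) : i = j := by
  rcases Nat.even_or_odd (i + j) with heven | hodd
  · exact (altWalk_eq_of_mod_two_eq hN₁ hN₂ hv hv hi hj (by grind)).2
  · wlog hij : i < j generalizing i j
    · exact (this hj hi (by rwa [add_comm]) (by grind)).symm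
    obtain ⟨d, rfl⟩ : ∃ d, j = i + 2 * d + 1 := ⟨(j - i - 1) / 2, by grind⟩
    exact (altWalk_ne_of_odd_gap hN₁ hN₂ d hi hj).elim

end AltWalk

section Approximation

variable {V : Type*} {G : SimpleGraph V} {M M' : Set (Sym2 V)} {v : V} {k L : ℕ}

theorem isAugmentingPath_altWalk (hM : IsMatching G M) (hM' : IsMatching G M')
    (hv : ¬ MatchedBy M v) (hL : L % 2 = 1) (hsome : (altWalk M' M v L).isSome)
    (hstuck : altWalk M' M v (L + 1) = none) :
    IsAugmentingPath G M L fun n => (altWalk M' M v n).getD v := by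
  set p := fun n => (altWalk M' M v n).getD v
  have hp : ∀ n ≤ L, altWalk M' M v n = some (p n) := fun n hn => altWalk_eq_some_getD hsome hn
  have hedge : ∀ i < L, s(p i, p (i + 1)) ∈ if i % 2 = 0 then M' else M := fun i hi =>
    altWalk_mk_mem hM' hM (hp i hi.le) (hp (i + 1) hi)
  refine ⟨by omega, fun i j hi hj hij => ?_, fun i hi => ?_, fun i hi => ⟨fun hmem => ?_, ?_⟩,
    hv, ?_⟩
  · exact altWalk_injective hM' hM hv (hp i hi) (hij ▸ hp j hj)
  · exact G.mem_edgeSet.mp ((hM'.ite hM _).1 (hedge i hi))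
  · -- an edge in both matchings would send the walk straight back to `p i`
    by_contra hodd
    have hback : altWalk M' M v (i + 2) = some (p i) := by
      rw [altWalk_succ_of_eq_some (hp (i + 1) hi), if_neg (by omega),
        hM.partner_eq_some_iff, Sym2.eq_swap]
      exact hmem
    exact absurd (altWalk_injective hM' hM hv (hp i hi.le) hback) (by omega)
  · intro hodd
    simpa [hodd] using hedge i hi
  · rw [← partner_eq_none_iff, ← hstuck, altWalk_succ_of_eq_some (hp L le_rfl),
      if_neg (by omega)]

variable [Finite V]

theorem ncard_stuck_le (hM : IsMatching G M) (hM' : IsMatching G M')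
    (hnoaug : ∀ ℓ, ℓ ≤ 2 * k - 1 → ∀ p : ℕ → V, ¬ IsAugmentingPath G M ℓ p) :
    {v ∈ {v | MatchedBy M' v} \ {v | MatchedBy M v} | altWalk M' M v (2 * k) = none}.ncard ≤
      ({v | MatchedBy M v} \ {v | MatchedBy M' v}).ncard := by
  refine Set.ncard_le_ncard_of_forall_subsingleton
    (fun v x => ∃ L, L % 2 = 0 ∧ altWalk M' M v L = some x) ?_ ?_
  · rintro v ⟨⟨hv', hv⟩, hnone⟩
    obtain ⟨L, hLk, hsome, hstuck⟩ := exists_last_isSome_of_eq_none _ rfl hnone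
    obtain ⟨x, hx⟩ := Option.isSome_iff_exists.mp hsome
    have hL : L % 2 = 0 := by
      by_contra hodd
      exact hnoaug L (by omega) _ (isAugmentingPath_altWalk hM hM' hv (by omega) hsome hstuck)
    obtain ⟨L, rfl⟩ : ∃ L', L = L' + 1 := by
      refine Nat.exists_eq_succ_of_ne_zero fun hL0 => ?_
      subst hL0
      rw [altWalk_succ_of_eq_some rfl, if_pos rfl, partner_eq_none_iff] at hstuck
      exact hstuck hv'
    refine ⟨x, ⟨?_, ?_⟩, L + 1, hL, hx⟩
    · simpa [show L % 2 = 1 by omega] using altWalk_matchedBy_of_succ hM' hM hx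
    · rwa [altWalk_succ_of_eq_some hx, if_pos hL, partner_eq_none_iff] at hstuck
  · rintro x - v ⟨⟨⟨-, hv⟩, -⟩, L, hL, hvx⟩ u ⟨⟨⟨-, hu⟩, -⟩, L', hL', hux⟩
    exact (altWalk_eq_of_mod_two_eq hM' hM hv hu hvx hux (by omega)).1

theorem mul_ncard_unstuck_le (hM : IsMatching G M) (hM' : IsMatching G M') :
    k * {v | ¬ MatchedBy M v ∧ (altWalk M' M v (2 * k)).isSome}.ncard ≤
      ({v | MatchedBy M v} ∩ {v | MatchedBy M' v}).ncard := by
  set S := {v | ¬ MatchedBy M v ∧ (altWalk M' M v (2 * k)).isSome}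
  rw [mul_comm, show S.ncard * k = (S ×ˢ Set.Iio k).ncard by simp]
  refine Set.ncard_le_ncard_of_forall_subsingleton
    (fun va x => altWalk M' M va.1 (2 * va.2 + 1) = some x) ?_ ?_
  · rintro ⟨v, a⟩ ⟨⟨hv, hsome⟩, ha : a < k⟩
    obtain ⟨z, hz⟩ := Option.isSome_iff_exists.mp hsome
    obtain ⟨x, hx⟩ := exists_altWalk_eq_some_of_le (m := 2 * a + 1) hz (by omega)
    obtain ⟨y, hy⟩ := exists_altWalk_eq_some_of_le (m := 2 * a + 1 + 1) hz (by omega)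
    refine ⟨x, ⟨?_, ?_⟩, hx⟩
    · exact ⟨_, by simpa using altWalk_mk_mem hM' hM hx hy, Sym2.mem_mk_left x y⟩
    · simpa using altWalk_matchedBy_of_succ hM' hM hx
  · rintro x - ⟨v, a⟩ ⟨⟨⟨hv, -⟩, -⟩, hvx⟩ ⟨u, b⟩ ⟨⟨⟨hu, -⟩, -⟩, hux⟩
    obtain ⟨rfl, hab⟩ := altWalk_eq_of_mod_two_eq hM' hM hv hu hvx hux (by omega)
    simp only [Prod.mk.injEq, true_and]
    omega

theorem mul_ncard_diff_le (hM : IsMatching G M) (hM' : IsMatching G M')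
    (hnoaug : ∀ ℓ, ℓ ≤ 2 * k - 1 → ∀ p : ℕ → V, ¬ IsAugmentingPath G M ℓ p) :
    k * ({v | MatchedBy M' v} \ {v | MatchedBy M v}).ncard ≤
      k * ({v | MatchedBy M v} \ {v | MatchedBy M' v}).ncard +
        ({v | MatchedBy M v} ∩ {v | MatchedBy M' v}).ncard := by
  calc k * ({v | MatchedBy M' v} \ {v | MatchedBy M v}).ncard
      ≤ k * ({v ∈ {v | MatchedBy M' v} \ {v | MatchedBy M v} |
            altWalk M' M v (2 * k) = none}.ncard +
          {v | ¬ MatchedBy M v ∧ (altWalk M' M v (2 * k)).isSome}.ncard) := by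
        gcongr
        refine (Set.ncard_le_ncard fun v hv => ?_).trans (Set.ncard_union_le _ _)
        cases h : altWalk M' M v (2 * k) <;> simp_all
    _ ≤ _ := by
        rw [mul_add]
        exact add_le_add (Nat.mul_le_mul_left k (ncard_stuck_le hM hM' hnoaug))
          (mul_ncard_unstuck_le hM hM')

end Approximation

theorem maximal_matching_no_short_aug_path_approx_general
    {V : Type*} [Fintype V] (G : SimpleGraph V) (k : ℕ)
    (M : Set (Sym2 V)) (hM : IsMatching G M)
    (hnoaug : ∀ ℓ, ℓ ≤ 2 * k - 1 → ∀ p : ℕ → V, ¬ IsAugmentingPath G M ℓ p)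
    (M' : Set (Sym2 V)) (hM' : IsMatching G M') :
    k * M'.ncard ≤ (k + 1) * M.ncard := by
  have hM'card := Set.ncard_inter_add_ncard_sdiff_eq_ncard
    {v | MatchedBy M' v} {v | MatchedBy M v}
  have hMcard := Set.ncard_inter_add_ncard_sdiff_eq_ncard
    {v | MatchedBy M v} {v | MatchedBy M' v}
  rw [hM'.ncard_setOf_matchedBy, Set.inter_comm] at hM'card
  rw [hM.ncard_setOf_matchedBy] at hMcard
  have hdiff := mul_ncard_diff_le hM hM' hnoaug
  nlinarith

/-- If `M` is a maximal matching of a finite simple graph `G` admitting no augmenting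
path of length at most `2k - 1` (`k ≥ 1`), then for every matching `M'` of `G` we have
`k·|M'| ≤ (k+1)·|M|`. -/
theorem maximal_matching_no_short_aug_path_approx
    {V : Type*} [Fintype V] (G : SimpleGraph V) (k : ℕ) (hk : 1 ≤ k)
    (M : Set (Sym2 V)) (hM : IsMatching G M)
    (hmax : ∀ N, IsMatching G N → M ⊆ N → N = M)
    (hnoaug : ∀ ℓ, ℓ ≤ 2 * k - 1 → ∀ p : ℕ → V, ¬ IsAugmentingPath G M ℓ p)
    (M' : Set (Sym2 V)) (hM' : IsMatching G M') :
    k * M'.ncard ≤ (k + 1) * M.ncard :=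
  maximal_matching_no_short_aug_path_approx_general G k M hM hnoaug M' hM'
end

section
/- Let G be a finite simple graph and let M be a maximal matching of G with respect to which G has no augmenting path of length 3. Then for every matching M′ of G one has 2·|M′| ≤ 3·|M|; in other words, M is a 3/2-approximate maximum cardinality matching of G. -/
/-- `u–v–x–y` is a 3-length augmenting path with respect to `M`: four distinct vertices,
`u` and `y` free, `(u,v)` and `(x,y)` edges of `G` not in `M`, and matched middle edge
`(v,x) ∈ M`. -/
def ThreeAugPath {V : Type*} (G : SimpleGraph V) (M : Set (Sym2 V)) (u v x y : V) : Prop :=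
  u ≠ v ∧ u ≠ x ∧ u ≠ y ∧ v ≠ x ∧ v ≠ y ∧ x ≠ y ∧
  ¬ MatchedBy M u ∧ ¬ MatchedBy M y ∧
  G.Adj u v ∧ G.Adj x y ∧ s(u, v) ∉ M ∧ s(x, y) ∉ M ∧ s(v, x) ∈ M

open scoped Classical

/-- Two `Sym2`s share a vertex. -/
def Touch {V : Type*} (e m : Sym2 V) : Prop := ∃ v : V, v ∈ e ∧ v ∈ m

lemma touch_comm {V : Type*} (e m : Sym2 V) : Touch e m ↔ Touch m e := by
  constructor <;> rintro ⟨v, h1, h2⟩ <;> exact ⟨v, h2, h1⟩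

/-- A matching has at most two edges touching any fixed `Sym2`. -/
lemma matching_touch_card_le {V : Type*} [Fintype V] {G : SimpleGraph V}
    {N : Set (Sym2 V)} (hN : IsMatching G N) (f : Sym2 V) :
    (((Set.toFinite N).toFinset).filter (fun e => Touch e f)).card ≤ 2 := by
  induction f using Sym2.ind with
  | _ v x =>
    have hmaps : ∀ a ∈ ((Set.toFinite N).toFinset).filter (fun e => Touch e s(v, x)),
        (if h : Touch a s(v, x) then h.choose else v) ∈ ({v, x} : Finset V) := by
      intro a ha
      rw [Finset.mem_filter] at ha
      rw [dif_pos ha.2]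
      have := ha.2.choose_spec.2
      rw [Sym2.mem_iff] at this
      simp only [Finset.mem_insert, Finset.mem_singleton]
      exact this
    have hinj : Set.InjOn (fun a => if h : Touch a s(v, x) then h.choose else v)
        ↑(((Set.toFinite N).toFinset).filter (fun e => Touch e s(v, x))) := by
      intro a ha b hb hab
      simp only [Finset.coe_filter, Set.mem_setOf_eq, Set.Finite.mem_toFinset] at ha hb
      simp only [dif_pos ha.2, dif_pos hb.2] at hab
      by_contra hne
      exact hN.2 a ha.1 b hb.1 hne _ ha.2.choose_spec.1 (hab ▸ hb.2.choose_spec.1)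
    calc (((Set.toFinite N).toFinset).filter (fun e => Touch e s(v, x))).card
        ≤ ({v, x} : Finset V).card := Finset.card_le_card_of_injOn _ hmaps hinj
      _ ≤ 2 := Finset.card_insert_le v {x} |>.trans (by simp)

/-- Every edge of a matching `M'` touches some edge of a maximal matching `M`. -/
lemma touch_of_maximal {V : Type*} [Fintype V] {G : SimpleGraph V}
    {M : Set (Sym2 V)} (hM : IsMatching G M)
    (hmax : ∀ N, IsMatching G N → M ⊆ N → N = M)
    {M' : Set (Sym2 V)} (hM' : IsMatching G M')
    {e : Sym2 V} (he : e ∈ M') : ∃ m ∈ M, Touch e m := by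
  by_cases heM : e ∈ M
  · refine ⟨e, heM, ?_⟩
    induction e using Sym2.ind with
    | _ a b => exact ⟨a, by simp, by simp⟩
  · by_contra h
    push_neg at h
    have hN : IsMatching G (insert e M) := by
      constructor
      · intro f hf
        rcases hf with rfl | hf
        · exact hM'.1 he
        · exact hM.1 hf
      · intro a ha b hb hab w hwa hwb
        rcases ha with rfl | ha <;> rcases hb with rfl | hb
        · exact hab rfl
        · exact h b hb ⟨w, hwa, hwb⟩
        · exact h a ha ⟨w, hwb, hwa⟩
        · exact hM.2 a ha b hb hab w hwa hwb
    have := hmax _ hN (Set.subset_insert e M)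
    exact heM (this ▸ Set.mem_insert e M)

/-- Core case of the charging argument. -/
lemma charge_core {V : Type*} [Fintype V] {G : SimpleGraph V}
    {M : Set (Sym2 V)} (hM : IsMatching G M)
    (hnoaug : ∀ u v x y : V, ¬ ThreeAugPath G M u v x y)
    {M' : Set (Sym2 V)} (hM' : IsMatching G M')
    {v x : V} (hm : s(v, x) ∈ M)
    {e1 e2 : Sym2 V} (h1 : e1 ∈ M') (h2 : e2 ∈ M') (hne : e1 ≠ e2)
    (hv : v ∈ e1) (hx : x ∈ e2) :
    ∃ e ∈ M', Touch e s(v, x) ∧ ∃ m2 ∈ M, m2 ≠ s(v, x) ∧ Touch e m2 := by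
  obtain ⟨u, hu⟩ := Sym2.mem_iff_exists.mp hv
  obtain ⟨y, hy⟩ := Sym2.mem_iff_exists.mp hx
  subst hu; subst hy
  have hadj_vx : G.Adj v x := hM.1 hm
  have hadj_vu : G.Adj v u := hM'.1 h1
  have hadj_xy : G.Adj x y := hM'.1 h2
  have hvx : v ≠ x := hadj_vx.ne
  have hvu : v ≠ u := hadj_vu.ne
  have hxy : x ≠ y := hadj_xy.ne
  have hvne2 : v ∉ s(x, y) := fun hc => hM'.2 _ h1 _ h2 hne v (by simp) hc
  have hvy : v ≠ y := fun hc => hvne2 (by rw [Sym2.mem_iff]; tauto)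
  have hux : u ≠ x := by
    intro hc
    subst hc
    exact hM'.2 _ h1 _ h2 hne u (by simp) (by simp)
  have huy : u ≠ y := by
    intro hc
    subst hc
    exact hM'.2 _ h1 _ h2 hne u (by simp) (by simp)
  have he1M : s(v, u) ∉ M := by
    intro hc
    have hne1 : s(v, u) ≠ s(v, x) := by
      intro h
      have : x ∈ s(v, u) := by rw [h]; simp
      rw [Sym2.mem_iff] at this
      rcases this with h' | h'
      · exact hvx h'.symm
      · exact hux h'.symm
    exact hM.2 _ hc _ hm hne1 v (by simp) (by simp)
  have he2M : s(x, y) ∉ M := by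
    intro hc
    have hne2 : s(x, y) ≠ s(v, x) := by
      intro h
      have : v ∈ s(x, y) := by rw [h]; simp
      exact hvne2 this
    exact hM.2 _ hc _ hm hne2 x (by simp) (by simp)
  by_cases hmu : MatchedBy M u
  · obtain ⟨m2, hm2, hum2⟩ := hmu
    refine ⟨s(v, u), h1, ⟨v, by simp, by simp⟩, m2, hm2, ?_, ⟨u, by simp, hum2⟩⟩
    intro hc
    subst hc
    rw [Sym2.mem_iff] at hum2
    tauto
  · by_cases hmy : MatchedBy M y
    · obtain ⟨m2, hm2, hym2⟩ := hmy
      refine ⟨s(x, y), h2, ⟨x, by simp, by simp⟩, m2, hm2, ?_, ⟨y, by simp, hym2⟩⟩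
      intro hc
      subst hc
      rw [Sym2.mem_iff] at hym2
      tauto
    · exfalso
      refine hnoaug u v x y ⟨hvu.symm, hux, huy, hvx, hvy, hxy, hmu, hmy, hadj_vu.symm,
        hadj_xy, ?_, he2M, hm⟩
      rwa [Sym2.eq_swap]

/-- Full charging lemma: if two distinct `M'`-edges touch an `M`-edge `m`, then some
`M'`-edge touching `m` also touches a second `M`-edge. -/
lemma charge {V : Type*} [Fintype V] {G : SimpleGraph V}
    {M : Set (Sym2 V)} (hM : IsMatching G M)
    (hnoaug : ∀ u v x y : V, ¬ ThreeAugPath G M u v x y)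
    {M' : Set (Sym2 V)} (hM' : IsMatching G M')
    {m : Sym2 V} (hm : m ∈ M)
    {e1 e2 : Sym2 V} (h1 : e1 ∈ M') (h2 : e2 ∈ M') (hne : e1 ≠ e2)
    (t1 : Touch e1 m) (t2 : Touch e2 m) :
    ∃ e ∈ M', Touch e m ∧ ∃ m2 ∈ M, m2 ≠ m ∧ Touch e m2 := by
  induction m using Sym2.ind with
  | _ v x =>
    obtain ⟨w1, hw1e, hw1m⟩ := t1
    obtain ⟨w2, hw2e, hw2m⟩ := t2
    rw [Sym2.mem_iff] at hw1m hw2m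
    have hdistinct : w1 ≠ w2 := by
      intro hc
      subst hc
      exact hM'.2 _ h1 _ h2 hne w1 hw1e hw2e
    rcases hw1m with h1v | h1x <;> rcases hw2m with h2v | h2x
    · exact absurd (h1v.trans h2v.symm) hdistinct
    · have hv : v ∈ e1 := by rw [← h1v]; exact hw1e
      have hx : x ∈ e2 := by rw [← h2x]; exact hw2e
      exact charge_core hM hnoaug hM' hm h1 h2 hne hv hx
    · have hx : x ∈ e1 := by rw [← h1x]; exact hw1e
      have hv : v ∈ e2 := by rw [← h2v]; exact hw2e
      have hm' : s(x, v) ∈ M := by rwa [Sym2.eq_swap]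
      obtain ⟨e, he, ht, m2, hm2, hm2ne, ht2⟩ :=
        charge_core hM hnoaug hM' hm' h1 h2 hne hx hv
      refine ⟨e, he, ?_, m2, hm2, ?_, ht2⟩
      · obtain ⟨w, hw1, hw2⟩ := ht
        exact ⟨w, hw1, by rwa [Sym2.eq_swap] at hw2⟩
      · intro hc
        exact hm2ne (by rw [hc, Sym2.eq_swap])
    · exact absurd (h1x.trans h2x.symm) hdistinct

/-- If `M` is a maximal matching of a finite simple graph `G` with no 3-length augmenting
path, then for every matching `M'` of `G` we have `2·|M'| ≤ 3·|M|`. -/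
theorem maximal_matching_no_three_aug_path_approx
    {V : Type*} [Fintype V] (G : SimpleGraph V)
    (M : Set (Sym2 V)) (hM : IsMatching G M)
    (hmax : ∀ N, IsMatching G N → M ⊆ N → N = M)
    (hnoaug : ∀ u v x y : V, ¬ ThreeAugPath G M u v x y)
    (M' : Set (Sym2 V)) (hM' : IsMatching G M') :
    2 * M'.ncard ≤ 3 * M.ncard := by
  set F : Finset (Sym2 V) := (Set.toFinite M).toFinset with hF
  set F' : Finset (Sym2 V) := (Set.toFinite M').toFinset with hF'
  have hmemF : ∀ m : Sym2 V, m ∈ F ↔ m ∈ M := fun m => Set.Finite.mem_toFinset _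
  have hmemF' : ∀ e : Sym2 V, e ∈ F' ↔ e ∈ M' := fun e => Set.Finite.mem_toFinset _
  set t : Sym2 V → ℕ := fun e => (F.filter (fun m => Touch e m)).card with ht
  set sc : Sym2 V → ℕ := fun m => (F'.filter (fun e => Touch e m)).card with hsc
  -- double counting
  have hdc : ∑ e ∈ F', t e = ∑ m ∈ F, sc m := by
    simp only [ht, hsc, Finset.card_filter]
    exact Finset.sum_comm
  -- every M'-edge touches an M-edge
  have htpos : ∀ e ∈ F', 1 ≤ t e := by
    intro e he
    obtain ⟨m, hm, htm⟩ := touch_of_maximal hM hmax hM' ((hmemF' e).mp he)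
    have : m ∈ F.filter (fun m => Touch e m) :=
      Finset.mem_filter.mpr ⟨(hmemF m).mpr hm, htm⟩
    exact Finset.card_pos.mpr ⟨m, this⟩
  -- each M-edge is touched by at most 2 M'-edges
  have hsle2 : ∀ m ∈ F, sc m ≤ 2 := fun m _ => matching_touch_card_le hM' m
  -- each M'-edge touches at most 2 M-edges
  have htle2 : ∀ e : Sym2 V, t e ≤ 2 := by
    intro e
    have h := matching_touch_card_le hM e
    calc t e = (F.filter (fun m => Touch m e)).card := by
          show (F.filter _).card = _
          congr 1
          exact Finset.filter_congr (fun m _ => by rw [touch_comm])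
      _ ≤ 2 := h
  set S : Finset (Sym2 V) := F'.filter (fun e => 2 ≤ t e) with hS
  set D : Finset (Sym2 V) := F.filter (fun m => 2 ≤ sc m) with hD
  -- charging: every doubly-touched M-edge is touched by a doubly-touching M'-edge
  have hchg : ∀ m ∈ D, ∃ e ∈ S, Touch e m := by
    intro m hmD
    rw [hD, Finset.mem_filter] at hmD
    obtain ⟨hmF, hsm⟩ := hmD
    obtain ⟨e1, he1, e2, he2, hne⟩ := Finset.one_lt_card.mp hsm
    rw [Finset.mem_filter] at he1 he2
    obtain ⟨e, heM', hte, m2, hm2, hm2ne, htem2⟩ := charge hM hnoaug hM' ((hmemF m).mp hmF)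
      ((hmemF' e1).mp he1.1) ((hmemF' e2).mp he2.1) hne he1.2 he2.2
    refine ⟨e, ?_, hte⟩
    rw [hS, Finset.mem_filter]
    refine ⟨(hmemF' e).mpr heM', ?_⟩
    apply Finset.one_lt_card.mpr
    exact ⟨m, Finset.mem_filter.mpr ⟨hmF, hte⟩, m2,
      Finset.mem_filter.mpr ⟨(hmemF m2).mpr hm2, htem2⟩, fun hc => hm2ne hc.symm⟩
  have hDS : D.card ≤ 2 * S.card := by
    set g : Sym2 V → Sym2 V := fun m => if h : ∃ e ∈ S, Touch e m then h.choose else m with hg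
    have hgeq : ∀ m ∈ D, g m ∈ S ∧ Touch (g m) m := by
      intro m hm
      have h1 : g m = (hchg m hm).choose := dif_pos (hchg m hm)
      rw [h1]
      exact (hchg m hm).choose_spec
    have hgmem : ∀ m ∈ D, g m ∈ S := fun m hm => (hgeq m hm).1
    have hcard := Finset.card_eq_sum_card_fiberwise hgmem
    have hfib : ∀ e ∈ S, (D.filter (fun m => g m = e)).card ≤ 2 := by
      intro e heS
      have h2 : (D.filter (fun m => g m = e)).card ≤ (F.filter (fun m => Touch m e)).card := by
        apply Finset.card_le_card
        intro m hm
        rw [Finset.mem_filter] at hm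
        obtain ⟨hmD, hge⟩ := hm
        have htouch : Touch (g m) m := (hgeq m hmD).2
        rw [hge] at htouch
        rw [Finset.mem_filter]
        exact ⟨(Finset.mem_filter.mp hmD).1, (touch_comm _ _).mp htouch⟩
      exact h2.trans (matching_touch_card_le hM e)
    calc D.card = ∑ e ∈ S, (D.filter (fun m => g m = e)).card := hcard
      _ ≤ ∑ _e ∈ S, 2 := Finset.sum_le_sum hfib
      _ = 2 * S.card := by rw [Finset.sum_const, smul_eq_mul, mul_comm]
  -- lower bound on total
  have hlb : F'.card + S.card ≤ ∑ e ∈ F', t e := by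
    have hsplit := Finset.sum_filter_add_sum_filter_not F' (fun e => 2 ≤ t e) t
    rw [← hS] at hsplit
    have h1 : 2 * S.card ≤ ∑ e ∈ S, t e := by
      have := Finset.card_nsmul_le_sum S t 2 (fun x hx => (Finset.mem_filter.mp hx).2)
      simpa [mul_comm] using this
    have h2 : (F'.filter (fun e => ¬ 2 ≤ t e)).card
        ≤ ∑ e ∈ F'.filter (fun e => ¬ 2 ≤ t e), t e := by
      have := Finset.card_nsmul_le_sum (F'.filter (fun e => ¬ 2 ≤ t e)) t 1
        (fun x hx => htpos x (Finset.mem_filter.mp hx).1)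
      simpa using this
    have h3 : S.card + (F'.filter (fun e => ¬ 2 ≤ t e)).card = F'.card := by
      have := Finset.card_filter_add_card_filter_not (s := F') (p := fun e => 2 ≤ t e)
      rw [← hS] at this
      exact this
    omega
  -- upper bounds on total
  have hub1 : ∑ m ∈ F, sc m ≤ F.card + D.card := by
    have hsplit := Finset.sum_filter_add_sum_filter_not F (fun m => 2 ≤ sc m) sc
    rw [← hD] at hsplit
    have h1 : ∑ m ∈ D, sc m ≤ 2 * D.card := by
      have := Finset.sum_le_card_nsmul D sc 2 (fun x hx => hsle2 x (Finset.mem_filter.mp hx).1)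
      simpa [mul_comm] using this
    have h2 : ∑ m ∈ F.filter (fun m => ¬ 2 ≤ sc m), sc m
        ≤ (F.filter (fun m => ¬ 2 ≤ sc m)).card := by
      have := Finset.sum_le_card_nsmul (F.filter (fun m => ¬ 2 ≤ sc m)) sc 1
        (fun x hx => by have := (Finset.mem_filter.mp hx).2; omega)
      simpa using this
    have h3 : D.card + (F.filter (fun m => ¬ 2 ≤ sc m)).card = F.card := by
      have := Finset.card_filter_add_card_filter_not (s := F) (p := fun m => 2 ≤ sc m)
      rw [← hD] at this
      exact this
    omega
  have hub2 : ∑ m ∈ F, sc m ≤ 2 * F.card := by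
    have := Finset.sum_le_card_nsmul F sc 2 hsle2
    simpa [mul_comm] using this
  have hcard' : M'.ncard = F'.card := Set.ncard_eq_toFinset_card M' (Set.toFinite M')
  have hcard : M.ncard = F.card := Set.ncard_eq_toFinset_card M (Set.toFinite M)
  rw [hcard, hcard']
  omega
end

section
/- Let G be a finite simple graph, M a matching of G, and let u and w be distinct free vertices joined by an edge of G such that every neighbour of u other than w is matched by M. Then M′ := M ∪ {(u,w)} is a matching of G, and there is no 3-length augmenting path with respect to M′ whose matched (middle) edge is (u,w). -/
/-- If `u` and `w` are distinct free vertices joined by an edge of `G` and every neighbour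
of `u` other than `w` is matched by `M`, then `M ∪ {(u,w)}` is a matching and there is no
3-length augmenting path with respect to it whose matched (middle) edge is `(u,w)`. -/
theorem match_free_vertex_no_new_three_aug_path
    {V : Type*} [Fintype V] (G : SimpleGraph V) (M : Set (Sym2 V)) (hM : IsMatching G M)
    (u w : V) (huw : u ≠ w)
    (hu : ¬ MatchedBy M u) (hw : ¬ MatchedBy M w) (hadj : G.Adj u w)
    (hnbr : ∀ z : V, G.Adj u z → z ≠ w → MatchedBy M z) :
    IsMatching G (M ∪ {s(u, w)}) ∧
    ∀ a b : V, ¬ ThreeAugPath G (M ∪ {s(u, w)}) a u w b ∧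
               ¬ ThreeAugPath G (M ∪ {s(u, w)}) a w u b := by
  constructor
  · constructor
    · intro e he
      rcases he with he | he
      · exact hM.1 he
      · simp only [Set.mem_singleton_iff] at he
        subst he
        exact hadj
    · intro e he f hf hef v hve
      rcases he with he | he <;> rcases hf with hf | hf
      · exact hM.2 e he f hf hef v hve
      · simp only [Set.mem_singleton_iff] at hf
        subst hf
        intro hvf
        rcases Sym2.mem_iff.mp hvf with rfl | rfl
        · exact hu ⟨e, he, hve⟩
        · exact hw ⟨e, he, hve⟩
      · simp only [Set.mem_singleton_iff] at he
        subst he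
        intro hvf
        rcases Sym2.mem_iff.mp hve with rfl | rfl
        · exact hu ⟨f, hf, hvf⟩
        · exact hw ⟨f, hf, hvf⟩
      · simp only [Set.mem_singleton_iff] at he hf
        exact absurd (he.trans hf.symm) hef
  · intro a b
    constructor
    · rintro ⟨hau, haw, hab, huw', hub, hwb, hfa, hfb, hadj_au, hadj_wb, _, _, _⟩
      obtain ⟨e, he, hae⟩ := hnbr a hadj_au.symm haw
      exact hfa ⟨e, Or.inl he, hae⟩
    · rintro ⟨haw', hau', hab, hwu, hwb, hub, hfa, hfb, hadj_aw, hadj_ub, _, _, _⟩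
      obtain ⟨e, he, hbe⟩ := hnbr b hadj_ub hwb.symm
      exact hfb ⟨e, Or.inl he, hbe⟩
end

section
/- Let G be a finite simple graph and M a matching of G. Let u and z be distinct free vertices such that every neighbour of u is matched by M and every neighbour of z is matched by M. Suppose v is a neighbour of u, (v,y) ∈ M, and z is a neighbour of y. Then M′ := (M ∖ {(v,y)}) ∪ {(u,v), (y,z)} is a matching of G with |M′| = |M| + 1, and no 3-length augmenting path with respect to M′ contains the vertex u or the vertex z. -/
section

variable {V : Type*} {G : SimpleGraph V} {M N : Set (Sym2 V)}

def augment (M : Set (Sym2 V)) (u v y z : V) : Set (Sym2 V) :=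
  (M \ {s(v, y)}) ∪ {s(u, v), s(y, z)}

theorem IsMatching.mono (hM : IsMatching G M) (hNM : N ⊆ M) : IsMatching G N :=
  ⟨hNM.trans hM.1, fun e he f hf => hM.2 e (hNM he) f (hNM hf)⟩

theorem IsMatching.union (hM : IsMatching G M) (hN : IsMatching G N)
    (hMN : ∀ e ∈ M, ∀ f ∈ N, ∀ w ∈ e, w ∉ f) : IsMatching G (M ∪ N) := by
  refine ⟨Set.union_subset hM.1 hN.1, ?_⟩
  rintro e (he | he) f (hf | hf) hef w hwe hwf
  · exact hM.2 e he f hf hef w hwe hwf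
  · exact hMN e he f hf w hwe hwf
  · exact hMN f hf e he w hwf hwe
  · exact hN.2 e he f hf hef w hwe hwf

theorem isMatching_singleton {e : Sym2 V} (he : e ∈ G.edgeSet) : IsMatching G {e} := by
  refine ⟨Set.singleton_subset_iff.mpr he, ?_⟩
  rintro e rfl f rfl hef
  exact absurd rfl hef

theorem isMatching_pair {a b c d : V} (hab : G.Adj a b) (hcd : G.Adj c d)
    (hac : a ≠ c) (had : a ≠ d) (hbc : b ≠ c) (hbd : b ≠ d) :
    IsMatching G {s(a, b), s(c, d)} := by
  rw [Set.insert_eq]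
  refine (isMatching_singleton hab).union (isMatching_singleton hcd) ?_
  rintro e rfl f rfl w hwe hwf
  rcases Sym2.mem_iff.mp hwe with rfl | rfl <;> rcases Sym2.mem_iff.mp hwf with h | h <;>
    contradiction

theorem IsMatching.augment (hM : IsMatching G M) {u v y z : V} (hu : ¬ MatchedBy M u)
    (hz : ¬ MatchedBy M z) (huz : u ≠ z) (huv : G.Adj u v) (hvy : s(v, y) ∈ M)
    (hyz : G.Adj y z) : IsMatching G (augment M u v y z) := by
  have hvz : v ≠ z := fun h => hz ⟨s(v, y), hvy, h ▸ Sym2.mem_mk_left v y⟩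
  have huy : u ≠ y := fun h => hu ⟨s(v, y), hvy, h ▸ Sym2.mem_mk_right v y⟩
  refine (hM.mono Set.sdiff_subset).union
    (isMatching_pair huv hyz huy huz (hM.1 hvy).ne hvz) ?_
  rintro e ⟨heM, hne⟩ f hf w hwe hwf
  have hvy_e : ∀ x ∈ s(v, y), x ∉ e := hM.2 _ hvy e heM (Ne.symm hne)
  simp only [Set.mem_insert_iff, Set.mem_singleton_iff] at hf
  rcases hf with rfl | rfl <;> rcases Sym2.mem_iff.mp hwf with rfl | rfl
  · exact hu ⟨e, heM, hwe⟩
  · exact hvy_e w (Sym2.mem_mk_left w y) hwe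
  · exact hvy_e w (Sym2.mem_mk_right v w) hwe
  · exact hz ⟨e, heM, hwe⟩

theorem MatchedBy.augment {w : V} (h : MatchedBy M w) (u v y z : V) :
    MatchedBy (augment M u v y z) w := by
  obtain ⟨e, heM, hwe⟩ := h
  by_cases he : e = s(v, y)
  · subst he
    rcases Sym2.mem_iff.mp hwe with rfl | rfl
    · exact ⟨s(u, w), Or.inr (Set.mem_insert _ _), Sym2.mem_mk_right u w⟩
    · exact ⟨s(w, z), Or.inr (Set.mem_insert_of_mem _ rfl), Sym2.mem_mk_left w z⟩
  · exact ⟨e, Or.inl ⟨heM, he⟩, hwe⟩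

theorem matchedBy_augment_left (M : Set (Sym2 V)) (u v y z : V) :
    MatchedBy (augment M u v y z) u :=
  ⟨s(u, v), Or.inr (Set.mem_insert _ _), Sym2.mem_mk_left u v⟩

theorem matchedBy_augment_right (M : Set (Sym2 V)) (u v y z : V) :
    MatchedBy (augment M u v y z) z :=
  ⟨s(y, z), Or.inr (Set.mem_insert_of_mem _ rfl), Sym2.mem_mk_right y z⟩

theorem Set.ncard_diff_singleton_union_pair {α : Type*} {s : Set α} {a b c : α}
    (hs : s.Finite) (ha : a ∈ s) (hb : b ∉ s) (hc : c ∉ s) (hbc : b ≠ c) :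
    ((s \ {a}) ∪ {b, c}).ncard = s.ncard + 1 := by
  have hdisj : Disjoint (s \ {a}) {b, c} := by
    rw [Set.disjoint_right]
    rintro x (rfl | rfl) hx
    exacts [hb hx.1, hc hx.1]
  have hpos : 0 < s.ncard := (Set.ncard_pos hs).mpr ⟨a, ha⟩
  rw [Set.ncard_union_eq hdisj hs.sdiff (Set.toFinite _), Set.ncard_sdiff_singleton_of_mem ha,
    Set.ncard_pair hbc]
  omega

theorem ThreeAugPath.not_mem_of_neighbors_matchedBy {a b c d w : V}
    (hpath : ThreeAugPath G M a b c d) (hw : MatchedBy M w)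
    (hnbr : ∀ x, G.Adj w x → MatchedBy M x) : w ∉ ({a, b, c, d} : Set V) := by
  obtain ⟨-, -, -, -, -, -, ha, hd, hab, hcd, -, -, -⟩ := hpath
  simp only [Set.mem_insert_iff, Set.mem_singleton_iff]
  rintro (rfl | rfl | rfl | rfl)
  · exact ha hw
  · exact ha (hnbr a hab.symm)
  · exact hd (hnbr d hcd)
  · exact hd hw

end

/-- Augmenting along the 3-length augmenting path `u–v–y–z` when both free endpoints
`u` and `z` have no free neighbours yields a matching of size `|M| + 1`, and no
3-length augmenting path with respect to the new matching contains `u` or `z`. -/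
theorem fix_three_aug_path_no_new_aug_path
    {V : Type*} [Fintype V] (G : SimpleGraph V) (M : Set (Sym2 V)) (hM : IsMatching G M)
    (u z v y : V) (huz : u ≠ z)
    (hu : ¬ MatchedBy M u) (hz : ¬ MatchedBy M z)
    (hunbr : ∀ w : V, G.Adj u w → MatchedBy M w)
    (hznbr : ∀ w : V, G.Adj z w → MatchedBy M w)
    (huv : G.Adj u v) (hvy : s(v, y) ∈ M) (hyz : G.Adj y z) :
    IsMatching G ((M \ {s(v, y)}) ∪ {s(u, v), s(y, z)}) ∧
    ((M \ {s(v, y)}) ∪ {s(u, v), s(y, z)}).ncard = M.ncard + 1 ∧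
    ∀ a b c d : V, ThreeAugPath G ((M \ {s(v, y)}) ∪ {s(u, v), s(y, z)}) a b c d →
      u ∉ ({a, b, c, d} : Set V) ∧ z ∉ ({a, b, c, d} : Set V) := by
  have huy : u ≠ y := fun h => hu ⟨s(v, y), hvy, h ▸ Sym2.mem_mk_right v y⟩
  have huv_yz : s(u, v) ≠ s(y, z) := fun h =>
    (Sym2.mem_iff.mp (h ▸ Sym2.mem_mk_left u v)).elim huy huz
  refine ⟨hM.augment hu hz huz huv hvy hyz, ?_, fun a b c d hpath => ⟨?_, ?_⟩⟩
  · exact Set.ncard_diff_singleton_union_pair (Set.toFinite M) hvy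
      (fun h => hu ⟨_, h, Sym2.mem_mk_left u v⟩) (fun h => hz ⟨_, h, Sym2.mem_mk_right y z⟩)
      huv_yz
  · exact hpath.not_mem_of_neighbors_matchedBy (matchedBy_augment_left M u v y z)
      fun w hw => (hunbr w hw).augment u v y z
  · exact hpath.not_mem_of_neighbors_matchedBy (matchedBy_augment_right M u v y z)
      fun w hw => (hznbr w hw).augment u v y z
end

section
/- Let q be a real number with 0 ≤ q ≤ 1/3, let p = 1 − q, and let k and i be natural numbers. Then C(2k+i, k) · p^k · q^(k+i) ≤ (1/2)^i, where C(·,·) denotes the binomial coefficient. -/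
/-!
Expanding `(p + q) ^ n = 1` binomially, every single term `C(n, j) q ^ j p ^ (n - j)` is at most `1`.
For `n = 2k + i` this bounds `C(2k+i, k) p ^ k q ^ k` by `p ^ (-i)`, so the extra factor `q ^ i`
leaves at most `(q / p) ^ i`, and `q ≤ 1/3` means exactly `q / p ≤ 1/2`.
-/

theorem choose_mul_pow_mul_pow_le_one {R : Type*} [CommSemiring R] [PartialOrder R]
    [IsOrderedRing R] {p q : R} (hp : 0 ≤ p) (hq : 0 ≤ q) (hpq : p + q = 1) (n k : ℕ) :
    (n.choose k : R) * p ^ k * q ^ (n - k) ≤ 1 := by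
  rcases le_or_gt k n with hkn | hnk
  · calc (n.choose k : R) * p ^ k * q ^ (n - k)
        = p ^ k * q ^ (n - k) * n.choose k := by ring
      _ ≤ ∑ j ∈ Finset.range (n + 1), p ^ j * q ^ (n - j) * n.choose j :=
        Finset.single_le_sum (f := fun j => p ^ j * q ^ (n - j) * (n.choose j : R))
          (fun j _ => by positivity) (Finset.mem_range_succ_iff.mpr hkn)
      _ = 1 := by rw [← add_pow, hpq, one_pow]
  · simp [Nat.choose_eq_zero_of_lt hnk]

theorem choose_two_mul_add_mul_pow_mul_pow_le_pow {p q r : ℝ} (hp : 0 ≤ p) (hq : 0 ≤ q)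
    (hpq : p + q = 1) (hqr : q ≤ r * p) (k i : ℕ) :
    ((2 * k + i).choose k : ℝ) * p ^ k * q ^ (k + i) ≤ r ^ i := by
  have hp_pos : 0 < p := by
    refine hp.lt_of_ne fun hp0 => ?_
    rw [← hp0, mul_zero] at hqr
    linarith
  have hr : 0 ≤ r := nonneg_of_mul_nonneg_left (hq.trans hqr) hp_pos
  have hterm : ((2 * k + i).choose k : ℝ) * q ^ k * p ^ (k + i) ≤ 1 := by
    simpa [show 2 * k + i - k = k + i by omega] using
      choose_mul_pow_mul_pow_le_one hq hp (by rw [add_comm, hpq]) (2 * k + i) k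
  refine le_of_mul_le_mul_right ?_ (pow_pos hp_pos i)
  calc ((2 * k + i).choose k : ℝ) * p ^ k * q ^ (k + i) * p ^ i
      = ((2 * k + i).choose k : ℝ) * q ^ k * p ^ (k + i) * q ^ i := by ring
    _ ≤ 1 * (r * p) ^ i := by gcongr
    _ = r ^ i * p ^ i := by rw [one_mul, mul_pow]

/-- For a real `q` with `0 ≤ q ≤ 1/3`, `p = 1 - q`, and naturals `k`, `i`:
`C(2k+i, k) · p^k · q^(k+i) ≤ (1/2)^i`. -/
theorem choose_mul_pow_le_half_pow (q : ℝ) (hq0 : 0 ≤ q) (hq : q ≤ 1 / 3) (k i : ℕ) :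
    (Nat.choose (2 * k + i) k : ℝ) * (1 - q) ^ k * q ^ (k + i) ≤ (1 / 2) ^ i :=
  choose_two_mul_add_mul_pow_mul_pow_le_pow (by linarith) hq0 (sub_add_cancel 1 q)
    (by linarith) k i
end

section
/- Let q be a probability (a real/NNReal in [0,1]) with q ≤ 1/3, and let k and i be natural numbers. Then the binomial distribution with 2k+i independent trials and success probability q assigns probability at most (1/2)^i to the outcome of exactly k+i successes; formally, (PMF.binomial q h (2k+i)) evaluated at k+i is at most (1/2)^i. -/
/-!
Since `C(2k+i, k+i) = C(2k+i, k)`, the outcomes `k+i` and `k` of `Bin(2k+i, q)` differ only in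
their weights `q^(k+i) (1-q)^k` and `q^k (1-q)^(k+i)`, so the first is `(q/(1-q))^i` times the
second. For `q ≤ 1/3` this ratio is at most `(1/2)^i`, and the second probability is at most `1`.
-/

set_option linter.deprecated false

section

open NNReal ENNReal

namespace PMF

theorem binomial_apply_add_le_pow_mul {p : ℝ≥0} (h : p ≤ 1) {r : ℝ≥0∞}
    (hr : (p : ℝ≥0∞) ≤ r * (1 - p)) (b i : ℕ) :
    binomial p h (2 * b + i) ⟨b + i, Nat.lt_succ_of_le (by omega)⟩ ≤
      r ^ i * binomial p h (2 * b + i) ⟨b, Nat.lt_succ_of_le (by omega)⟩ := by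
  have hchoose : (2 * b + i).choose (b + i) = (2 * b + i).choose b := by
    rw [← Nat.choose_symm (by omega : b ≤ 2 * b + i), show 2 * b + i - b = b + i by omega]
  simp only [binomial_apply, Fin.val_last, show 2 * b + i - (b + i) = b by omega,
    show 2 * b + i - b = b + i by omega, hchoose]
  calc (p : ℝ≥0∞) ^ (b + i) * (1 - p) ^ b * ((2 * b + i).choose b : ℕ)
      = p ^ b * (1 - p) ^ b * ((2 * b + i).choose b : ℕ) * p ^ i := by ring
    _ ≤ p ^ b * (1 - p) ^ b * ((2 * b + i).choose b : ℕ) * (r * (1 - p)) ^ i := by gcongr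
    _ = r ^ i * (p ^ b * (1 - p) ^ (b + i) * ((2 * b + i).choose b : ℕ)) := by ring

end PMF

theorem ENNReal.le_half_mul_one_sub_of_le_third {q : ℝ≥0∞} (hq : q ≤ 1 / 3) :
    q ≤ 1 / 2 * (1 - q) := by
  have hq_top : q ≠ ⊤ := ne_top_of_le_ne_top (by simp) hq
  rw [one_div, ← ENNReal.div_eq_inv_mul, ENNReal.le_div_iff_mul_le (by norm_num) (by norm_num)]
  refine ENNReal.le_sub_of_add_le_right hq_top ?_
  calc q * 2 + q = q * 3 := by ring
    _ ≤ 1 / 3 * 3 := by gcongr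
    _ = 1 := ENNReal.div_mul_cancel (by norm_num) (by norm_num)

end

/-- For a probability `q ≤ 1/3`, the binomial distribution with `2k+i` trials and success
probability `q` assigns probability at most `(1/2)^i` to exactly `k+i` successes. -/
theorem binomial_eq_succ_count_le_half_pow (q : ENNReal) (hq : q ≤ 1 / 3) (h : q ≤ 1)
    (k i : ℕ) :
    PMF.binomial q.toNNReal
      (by simpa using ENNReal.toNNReal_mono ENNReal.one_ne_top h) (2 * k + i) ⟨k + i, by omega⟩ ≤ (1 / 2) ^ i := by
  have hp : (q.toNNReal : ENNReal) ≤ 1 / 2 * (1 - q.toNNReal) := by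
    rw [ENNReal.coe_toNNReal (ne_top_of_le_ne_top ENNReal.one_ne_top h)]
    exact ENNReal.le_half_mul_one_sub_of_le_third hq
  calc _ ≤ (1 / 2) ^ i * PMF.binomial q.toNNReal _ (2 * k + i) ⟨k, by omega⟩ :=
        PMF.binomial_apply_add_le_pow_mul _ hp k i
    _ ≤ (1 / 2) ^ i := mul_le_of_le_one_right' (PMF.coe_le_one _ _)
end

section
/- Let q be a real number with 0 ≤ q ≤ 1/3, let p = 1 − q, let k, i, n be natural numbers with n ≥ 1, and suppose (i : ℝ) ≥ 2 · logb 2 n (the base-2 logarithm of n). Then C(2k+i, k) · p^k · q^(k+i) ≤ 1/n². -/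
open Real

lemma choose_mul_two_pow_le (N j : ℕ) (h : j ≤ N) :
    Nat.choose N j * 2 ^ j ≤ 3 ^ N := by
  calc Nat.choose N j * 2 ^ j = 2 ^ j * 1 ^ (N - j) * Nat.choose N j := by ring
    _ ≤ ∑ m ∈ Finset.range (N + 1), 2 ^ m * 1 ^ (N - m) * Nat.choose N m :=
        Finset.single_le_sum (f := fun m => 2 ^ m * 1 ^ (N - m) * N.choose m)
          (fun m _ => Nat.zero_le _)
          (Finset.mem_range.2 (Nat.lt_succ_of_le h))
    _ = (2 + 1) ^ N := (add_pow 2 1 N).symm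
    _ = 3 ^ N := by norm_num

/-- For a real `q` with `0 ≤ q ≤ 1/3`, `p = 1 - q`, naturals `k`, `i`, `n` with `n ≥ 1` and
`i ≥ 2·log₂ n`: `C(2k+i, k) · p^k · q^(k+i) ≤ 1/n²`. -/
theorem choose_mul_pow_le_inv_sq (q : ℝ) (hq0 : 0 ≤ q) (hq : q ≤ 1 / 3)
    (k i n : ℕ) (hn : 1 ≤ n) (hi : (i : ℝ) ≥ 2 * Real.logb 2 n) :
    (Nat.choose (2 * k + i) k : ℝ) * (1 - q) ^ k * q ^ (k + i) ≤ 1 / (n : ℝ) ^ 2 := by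
  set N := 2 * k + i with hN
  -- binomial bound
  have hsym : N.choose k = N.choose (k + i) := by
    rw [← Nat.choose_symm (by omega : k + i ≤ N)]
    congr 1
    omega
  have hC : (N.choose k : ℝ) * 2 ^ (k + i) ≤ 3 ^ N := by
    have := choose_mul_two_pow_le N (k + i) (by omega)
    rw [hsym]
    exact_mod_cast this
  -- probability bound
  have hq1 : (1 - q) * q ≤ 2 / 9 := by nlinarith
  have hq1' : 0 ≤ (1 - q) * q := by nlinarith
  have hprob : (1 - q) ^ k * q ^ (k + i) ≤ (2 / 3 : ℝ) ^ k * (1 / 3 : ℝ) ^ (k + i) := by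
    have e1 : (1 - q) ^ k * q ^ (k + i) = ((1 - q) * q) ^ k * q ^ i := by
      rw [pow_add, mul_pow]; ring
    have e2 : (2 / 3 : ℝ) ^ k * (1 / 3 : ℝ) ^ (k + i) = (2 / 9 : ℝ) ^ k * (1 / 3 : ℝ) ^ i := by
      rw [pow_add, ← mul_assoc, ← mul_pow]; norm_num
    rw [e1, e2]
    have h1 : ((1 - q) * q) ^ k ≤ (2 / 9 : ℝ) ^ k := pow_le_pow_left₀ hq1' hq1 k
    have h2 : q ^ i ≤ (1 / 3 : ℝ) ^ i := pow_le_pow_left₀ hq0 (by linarith) i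
    exact mul_le_mul h1 h2 (pow_nonneg hq0 i) (by positivity)
  -- 2^i ≥ n²
  have hn0 : (0 : ℝ) < n := by exact_mod_cast hn
  have hn2 : (n : ℝ) ^ 2 ≤ 2 ^ i := by
    have hb : (n : ℝ) = (2 : ℝ) ^ (Real.logb 2 n) :=
      (Real.rpow_logb two_pos (by norm_num) hn0).symm
    calc (n : ℝ) ^ 2 = ((2 : ℝ) ^ (Real.logb 2 n)) ^ (2 : ℕ) := by rw [← hb]
      _ = (2 : ℝ) ^ (2 * Real.logb 2 n) := by
          rw [← Real.rpow_natCast ((2 : ℝ) ^ (Real.logb 2 n)) 2, ← Real.rpow_mul (by norm_num)]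
          norm_num [mul_comm]
      _ ≤ (2 : ℝ) ^ (i : ℝ) := Real.rpow_le_rpow_of_exponent_le (by norm_num) hi
      _ = 2 ^ i := Real.rpow_natCast 2 i
  -- combine
  have h3N : (0 : ℝ) < 3 ^ N := by positivity
  have h2i : (0 : ℝ) < (2 : ℝ) ^ i := by positivity
  have key : (N.choose k : ℝ) * ((2 / 3 : ℝ) ^ k * (1 / 3 : ℝ) ^ (k + i)) ≤ 1 / 2 ^ i := by
    have e : (N.choose k : ℝ) * ((2 / 3 : ℝ) ^ k * (1 / 3 : ℝ) ^ (k + i)) =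
        ((N.choose k : ℝ) * 2 ^ (k + i)) / (3 ^ N * 2 ^ i) := by
      rw [div_pow, div_pow, hN]
      field_simp
      ring_nf
    rw [e, div_le_div_iff₀ (by positivity) h2i, one_mul]
    nlinarith [mul_le_mul_of_nonneg_right hC (le_of_lt h2i)]
  calc (Nat.choose N k : ℝ) * (1 - q) ^ k * q ^ (k + i)
      = (N.choose k : ℝ) * ((1 - q) ^ k * q ^ (k + i)) := by ring
    _ ≤ (N.choose k : ℝ) * ((2 / 3 : ℝ) ^ k * (1 / 3 : ℝ) ^ (k + i)) :=
        mul_le_mul_of_nonneg_left hprob (by positivity)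
    _ ≤ 1 / 2 ^ i := key
    _ ≤ 1 / (n : ℝ) ^ 2 := by
        apply one_div_le_one_div_of_le (by positivity) hn2
end
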